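/- For the system E6, the operator identity L₁² + (1/4){L₂, X²} + (1/2)X L₂ X − L₂ H + (a + 3/4)X² = 0 holds, where H = ∂ₓ² + ∂_y² + a/x², L₁ = (1/2){x∂_y − y∂ₓ, ∂ₓ} − ay/x², L₂ = (x∂_y − y∂ₓ)² + ay²/x², X = ∂_y. -/

import Mathlib

noncomputable section

/-- Partial derivative in `x`. -/
def dx (f : ℝ × ℝ → ℂ) : ℝ × ℝ → ℂ := fun p => fderiv ℝ f p (1, 0)

/-- Partial derivative in `y`. -/
def dy (f : ℝ × ℝ → ℂ) : ℝ × ℝ → ℂ := fun p => fderiv ℝ f p (0, 1)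

/-- `M = x∂_y − y∂ₓ`. -/
def Mop (f : ℝ × ℝ → ℂ) : ℝ × ℝ → ℂ :=
  fun p => (p.1 : ℂ) * dy f p - (p.2 : ℂ) * dx f p

/-- `H = ∂ₓ² + ∂_y² + a/x²`. -/
def Hop (a : ℂ) (f : ℝ × ℝ → ℂ) : ℝ × ℝ → ℂ :=
  fun p => dx (dx f) p + dy (dy f) p + a / (p.1 : ℂ) ^ 2 * f p

/-- `L₁ = (1/2){x∂_y − y∂ₓ, ∂ₓ} − ay/x²`. -/
def L1 (a : ℂ) (f : ℝ × ℝ → ℂ) : ℝ × ℝ → ℂ :=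
  fun p => (1 / 2 : ℂ) * (Mop (dx f) p + dx (Mop f) p) - a * (p.2 : ℂ) / (p.1 : ℂ) ^ 2 * f p

/-- `L₂ = (x∂_y − y∂ₓ)² + ay²/x²`. -/
def L2 (a : ℂ) (f : ℝ × ℝ → ℂ) : ℝ × ℝ → ℂ :=
  fun p => Mop (Mop f) p + a * (p.2 : ℂ) ^ 2 / (p.1 : ℂ) ^ 2 * f p

open scoped ContDiff

namespace S11

def U : Set (ℝ × ℝ) := {p | p.1 ≠ 0}
lemma uOpen : IsOpen U := isOpen_ne.preimage continuous_fst

abbrev Sm (g : ℝ × ℝ → ℂ) : Prop := ContDiffOn ℝ (∞ : WithTop ℕ∞) g U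

variable {q : ℝ × ℝ} {g h : ℝ × ℝ → ℂ}

lemma Sm.diffAt (hg : Sm g) (hq : q ∈ U) : DifferentiableAt ℝ g q :=
  ((hg.differentiableOn (by simp)).differentiableAt (uOpen.mem_nhds hq))

lemma Sm.fderiv_diffAt (hg : Sm g) (hq : q ∈ U) :
    DifferentiableAt ℝ (fderiv ℝ g) q := by
  have h1 : ContDiffOn ℝ (∞ : WithTop ℕ∞) (fderiv ℝ g) U :=
    hg.fderiv_of_isOpen uOpen (by simp)
  exact (h1.differentiableOn (by simp)).differentiableAt (uOpen.mem_nhds hq)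

lemma Sm.dx (hg : Sm g) : Sm (dx g) :=
  (hg.fderiv_of_isOpen uOpen (by simp)).clm_apply contDiffOn_const

lemma Sm.dy (hg : Sm g) : Sm (dy g) :=
  (hg.fderiv_of_isOpen uOpen (by simp)).clm_apply contDiffOn_const

lemma dxU_congr (hgh : ∀ r ∈ U, g r = h r) (hq : q ∈ U) : dx g q = dx h q := by
  have : g =ᶠ[nhds q] h := Filter.eventuallyEq_of_mem (uOpen.mem_nhds hq) hgh
  simp only [_root_.dx, this.fderiv_eq]

lemma dyU_congr (hgh : ∀ r ∈ U, g r = h r) (hq : q ∈ U) : dy g q = dy h q := by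
  have : g =ᶠ[nhds q] h := Filter.eventuallyEq_of_mem (uOpen.mem_nhds hq) hgh
  simp only [_root_.dy, this.fderiv_eq]

lemma sym (hg : Sm g) (hq : q ∈ U) : dx (dy g) q = dy (dx g) q := by
  have hca : ContDiffAt ℝ 2 g q :=
    ((hg.of_le (WithTop.coe_le_coe.2 le_top)).contDiffAt (uOpen.mem_nhds hq))
  have hsym := hca.isSymmSndFDerivAt (by simp [minSmoothness_of_isRCLikeNormedField])
  have hd : DifferentiableAt ℝ (fderiv ℝ g) q := hg.fderiv_diffAt hq
  have e1 : dx (dy g) q = fderiv ℝ (fderiv ℝ g) q (1,0) (0,1) := by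
    show fderiv ℝ (fun r => fderiv ℝ g r (0,1)) q (1,0) = _
    rw [fderiv_clm_apply hd (differentiableAt_const _)]
    simp
  have e2 : dy (dx g) q = fderiv ℝ (fderiv ℝ g) q (0,1) (1,0) := by
    show fderiv ℝ (fun r => fderiv ℝ g r (1,0)) q (0,1) = _
    rw [fderiv_clm_apply hd (differentiableAt_const _)]
    simp
  rw [e1, e2, hsym.eq]

/-! basic derivative rules -/

lemma dx_add (hF : DifferentiableAt ℝ g q) (hG : DifferentiableAt ℝ h q) :
    dx (fun r => g r + h r) q = dx g q + dx h q := by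
  simp [_root_.dx, fderiv_fun_add hF hG]

lemma dy_add (hF : DifferentiableAt ℝ g q) (hG : DifferentiableAt ℝ h q) :
    dy (fun r => g r + h r) q = dy g q + dy h q := by
  simp [_root_.dy, fderiv_fun_add hF hG]

lemma dx_mul (hF : DifferentiableAt ℝ g q) (hG : DifferentiableAt ℝ h q) :
    dx (fun r => g r * h r) q = dx g q * h q + g q * dx h q := by
  simp [_root_.dx, fderiv_fun_mul hF hG, smul_eq_mul]; ring

lemma dy_mul (hF : DifferentiableAt ℝ g q) (hG : DifferentiableAt ℝ h q) :
    dy (fun r => g r * h r) q = dy g q * h q + g q * dy h q := by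
  simp [_root_.dy, fderiv_fun_mul hF hG, smul_eq_mul]; ring

lemma dx_const_mul (hF : DifferentiableAt ℝ g q) (c : ℂ) :
    dx (fun r => c * g r) q = c * dx g q := by
  simp [_root_.dx, fderiv_const_mul hF c]

lemma dy_const_mul (hF : DifferentiableAt ℝ g q) (c : ℂ) :
    dy (fun r => c * g r) q = c * dy g q := by
  simp [_root_.dy, fderiv_const_mul hF c]

lemma dx_const (c : ℂ) : dx (fun _ => c) q = 0 := by simp [_root_.dx]
lemma dy_const (c : ℂ) : dy (fun _ => c) q = 0 := by simp [_root_.dy]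

lemma hXf : HasFDerivAt (fun r : ℝ × ℝ => ((r.1 : ℝ) : ℂ))
    ((Complex.ofRealCLM).comp (ContinuousLinearMap.fst ℝ ℝ ℝ)) q :=
  ((Complex.ofRealCLM).comp (ContinuousLinearMap.fst ℝ ℝ ℝ)).hasFDerivAt

lemma hYf : HasFDerivAt (fun r : ℝ × ℝ => ((r.2 : ℝ) : ℂ))
    ((Complex.ofRealCLM).comp (ContinuousLinearMap.snd ℝ ℝ ℝ)) q :=
  ((Complex.ofRealCLM).comp (ContinuousLinearMap.snd ℝ ℝ ℝ)).hasFDerivAt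

lemma diffX : DifferentiableAt ℝ (fun r : ℝ × ℝ => ((r.1 : ℝ) : ℂ)) q := hXf.differentiableAt
lemma diffY : DifferentiableAt ℝ (fun r : ℝ × ℝ => ((r.2 : ℝ) : ℂ)) q := hYf.differentiableAt

lemma dx_X : dx (fun r : ℝ × ℝ => ((r.1 : ℝ) : ℂ)) q = 1 := by simp [_root_.dx, hXf.fderiv]
lemma dy_X : dy (fun r : ℝ × ℝ => ((r.1 : ℝ) : ℂ)) q = 0 := by simp [_root_.dy, hXf.fderiv]
lemma dx_Y : dx (fun r : ℝ × ℝ => ((r.2 : ℝ) : ℂ)) q = 0 := by simp [_root_.dx, hYf.fderiv]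
lemma dy_Y : dy (fun r : ℝ × ℝ => ((r.2 : ℝ) : ℂ)) q = 1 := by simp [_root_.dy, hYf.fderiv]

lemma diffIX (hq : q ∈ U) : DifferentiableAt ℝ (fun r : ℝ × ℝ => ((r.1 : ℝ) : ℂ)⁻¹) q :=
  diffX.inv (by exact_mod_cast hq)

lemma dx_IX (hq : q ∈ U) :
    dx (fun r : ℝ × ℝ => ((r.1 : ℝ) : ℂ)⁻¹) q = -(((q.1 : ℝ) : ℂ)⁻¹ * ((q.1 : ℝ) : ℂ)⁻¹) := by
  have hx : ((q.1 : ℝ) : ℂ) ≠ 0 := by exact_mod_cast hq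
  have key : ∀ r ∈ U, (fun s : ℝ × ℝ => ((s.1 : ℝ) : ℂ) * ((s.1 : ℝ) : ℂ)⁻¹) r
      = (fun _ => (1 : ℂ)) r := fun r hr => mul_inv_cancel₀ (by exact_mod_cast hr)
  have h0 : dx (fun s : ℝ × ℝ => ((s.1 : ℝ) : ℂ) * ((s.1 : ℝ) : ℂ)⁻¹) q = 0 := by
    rw [dxU_congr key hq, dx_const]
  rw [dx_mul diffX (diffIX hq), dx_X] at h0
  field_simp at h0 ⊢
  linear_combination h0

lemma dy_IX (hq : q ∈ U) :
    dy (fun r : ℝ × ℝ => ((r.1 : ℝ) : ℂ)⁻¹) q = 0 := by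
  have hx : ((q.1 : ℝ) : ℂ) ≠ 0 := by exact_mod_cast hq
  have key : ∀ r ∈ U, (fun s : ℝ × ℝ => ((s.1 : ℝ) : ℂ) * ((s.1 : ℝ) : ℂ)⁻¹) r
      = (fun _ => (1 : ℂ)) r := fun r hr => mul_inv_cancel₀ (by exact_mod_cast hr)
  have h0 : dy (fun s : ℝ × ℝ => ((s.1 : ℝ) : ℂ) * ((s.1 : ℝ) : ℂ)⁻¹) q = 0 := by
    rw [dyU_congr key hq, dy_const]
  rw [dy_mul diffX (diffIX hq), dy_X] at h0
  have h2 : ((q.1 : ℝ) : ℂ) * dy (fun r : ℝ × ℝ => ((r.1 : ℝ) : ℂ)⁻¹) q = 0 := by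
    linear_combination h0
  rcases mul_eq_zero.1 h2 with h | h
  · exact absurd h hx
  · exact h

lemma dx_pow (hg : DifferentiableAt ℝ g q) (n : ℕ) :
    dx (fun r => g r ^ n) q = n * g q ^ (n - 1) * dx g q := by
  induction n with
  | zero => simp [_root_.dx]
  | succ n ih =>
    have : dx (fun r => g r ^ n * g r) q = dx (fun r => g r ^ n) q * g q + g q ^ n * dx g q :=
      dx_mul (hg.pow n) hg
    rw [show (fun r => g r ^ (n+1)) = fun r => g r ^ n * g r from funext fun r => pow_succ _ _,
      this, ih]
    cases n with
    | zero => simp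
    | succ m =>
      push_cast
      rw [pow_succ]
      ring

lemma dy_pow (hg : DifferentiableAt ℝ g q) (n : ℕ) :
    dy (fun r => g r ^ n) q = n * g q ^ (n - 1) * dy g q := by
  induction n with
  | zero => simp [_root_.dy]
  | succ n ih =>
    have : dy (fun r => g r ^ n * g r) q = dy (fun r => g r ^ n) q * g q + g q ^ n * dy g q :=
      dy_mul (hg.pow n) hg
    rw [show (fun r => g r ^ (n+1)) = fun r => g r ^ n * g r from funext fun r => pow_succ _ _,
      this, ih]
    cases n with
    | zero => simp
    | succ m =>
      push_cast
      rw [pow_succ]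
      ring


/-! iterated partials -/

def P (f : ℝ × ℝ → ℂ) (i j : ℕ) : ℝ × ℝ → ℂ := _root_.dx^[i] (_root_.dy^[j] f)

lemma Sm.P (hf : Sm g) (i j : ℕ) : Sm (P g i j) := by
  have h1 : Sm (_root_.dy^[j] g) := by
    induction j with
    | zero => exact hf
    | succ n ih => rw [Function.iterate_succ_apply']; exact ih.dy
  show Sm (_root_.dx^[i] (_root_.dy^[j] g))
  induction i with
  | zero => exact h1
  | succ n ih => rw [Function.iterate_succ_apply']; exact ih.dx

lemma P_dx {f : ℝ × ℝ → ℂ} (i j : ℕ) : _root_.dx (P f i j) = P f (i+1) j := by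
  rw [S11.P, S11.P, Function.iterate_succ_apply']

lemma P_dy (hf : Sm g) (i j : ℕ) : ∀ q ∈ U, _root_.dy (P g i j) q = P g i (j+1) q := by
  induction i with
  | zero =>
    intro q hq
    show _root_.dy (_root_.dy^[j] g) q = _root_.dy^[j+1] g q
    rw [Function.iterate_succ_apply']
  | succ n ih =>
    intro q hq
    rw [show S11.P g (n+1) j = _root_.dx (S11.P g n j) from (P_dx n j).symm,
      ← sym (hf.P n j) hq, dxU_congr ih hq, P_dx]


/-! basis terms -/

def B (f : ℝ × ℝ → ℂ) (k l m i j : ℕ) : ℝ × ℝ → ℂ :=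
  fun r => ((r.1 : ℝ) : ℂ) ^ k * ((r.2 : ℝ) : ℂ) ^ l * (((r.1 : ℝ) : ℂ)⁻¹) ^ m * P f i j r

lemma diffB (hf : Sm g) (hq : q ∈ U) {k l m i j : ℕ} :
    DifferentiableAt ℝ (B g k l m i j) q :=
  (((diffX.pow k).mul (diffY.pow l)).mul ((diffIX hq).pow m)).mul ((hf.P i j).diffAt hq)

lemma dx_B (hf : Sm g) (hq : q ∈ U) (k l m i j : ℕ) :
    _root_.dx (B g k l m i j) q =
      (k : ℂ) * B g (k-1) l m i j q - (m : ℂ) * B g k l (m+1) i j q + B g k l m (i+1) j q := by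
  have hA1 : DifferentiableAt ℝ (fun r : ℝ × ℝ => ((r.1 : ℝ) : ℂ) ^ k) q := diffX.pow k
  have hA2 : DifferentiableAt ℝ (fun r : ℝ × ℝ => ((r.2 : ℝ) : ℂ) ^ l) q := diffY.pow l
  have hA3 : DifferentiableAt ℝ (fun r : ℝ × ℝ => (((r.1 : ℝ) : ℂ)⁻¹) ^ m) q := (diffIX hq).pow m
  have hA12 : DifferentiableAt ℝ
      (fun r : ℝ × ℝ => ((r.1 : ℝ) : ℂ) ^ k * ((r.2 : ℝ) : ℂ) ^ l) q := hA1.mul hA2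
  have hA123 : DifferentiableAt ℝ
      (fun r : ℝ × ℝ => ((r.1 : ℝ) : ℂ) ^ k * ((r.2 : ℝ) : ℂ) ^ l * (((r.1 : ℝ) : ℂ)⁻¹) ^ m) q :=
    hA12.mul hA3
  have hP : DifferentiableAt ℝ (P g i j) q := (hf.P i j).diffAt hq
  have e1 : _root_.dx (B g k l m i j) q =
      _root_.dx (fun r : ℝ × ℝ =>
        ((r.1 : ℝ) : ℂ) ^ k * ((r.2 : ℝ) : ℂ) ^ l * (((r.1 : ℝ) : ℂ)⁻¹) ^ m) q * P g i j q
      + (((q.1 : ℝ) : ℂ) ^ k * ((q.2 : ℝ) : ℂ) ^ l * (((q.1 : ℝ) : ℂ)⁻¹) ^ m)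
        * _root_.dx (P g i j) q := dx_mul hA123 hP
  have e2 : _root_.dx (fun r : ℝ × ℝ =>
        ((r.1 : ℝ) : ℂ) ^ k * ((r.2 : ℝ) : ℂ) ^ l * (((r.1 : ℝ) : ℂ)⁻¹) ^ m) q =
      _root_.dx (fun r : ℝ × ℝ => ((r.1 : ℝ) : ℂ) ^ k * ((r.2 : ℝ) : ℂ) ^ l) q
        * (((q.1 : ℝ) : ℂ)⁻¹) ^ m
      + (((q.1 : ℝ) : ℂ) ^ k * ((q.2 : ℝ) : ℂ) ^ l)
        * _root_.dx (fun r : ℝ × ℝ => (((r.1 : ℝ) : ℂ)⁻¹) ^ m) q := dx_mul hA12 hA3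
  have e3 : _root_.dx (fun r : ℝ × ℝ => ((r.1 : ℝ) : ℂ) ^ k * ((r.2 : ℝ) : ℂ) ^ l) q =
      _root_.dx (fun r : ℝ × ℝ => ((r.1 : ℝ) : ℂ) ^ k) q * ((q.2 : ℝ) : ℂ) ^ l
      + ((q.1 : ℝ) : ℂ) ^ k * _root_.dx (fun r : ℝ × ℝ => ((r.2 : ℝ) : ℂ) ^ l) q :=
    dx_mul hA1 hA2
  have p1 : _root_.dx (fun r : ℝ × ℝ => ((r.1 : ℝ) : ℂ) ^ k) q
      = (k : ℂ) * ((q.1 : ℝ) : ℂ) ^ (k - 1) * 1 := by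
    rw [dx_pow diffX k, dx_X]
  have p2 : _root_.dx (fun r : ℝ × ℝ => ((r.2 : ℝ) : ℂ) ^ l) q
      = (l : ℂ) * ((q.2 : ℝ) : ℂ) ^ (l - 1) * 0 := by
    rw [dx_pow diffY l, dx_Y]
  have p3 : _root_.dx (fun r : ℝ × ℝ => (((r.1 : ℝ) : ℂ)⁻¹) ^ m) q
      = (m : ℂ) * (((q.1 : ℝ) : ℂ)⁻¹) ^ (m - 1)
        * -(((q.1 : ℝ) : ℂ)⁻¹ * ((q.1 : ℝ) : ℂ)⁻¹) := by
    rw [dx_pow (diffIX hq) m, dx_IX hq]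
  rw [e1, e2, e3, p1, p2, p3, P_dx]
  show _ = (k : ℂ) * B g (k-1) l m i j q - (m : ℂ) * B g k l (m+1) i j q + B g k l m (i+1) j q
  simp only [S11.B]
  rcases k with _ | k <;> rcases m with _ | m <;>
    simp only [Nat.zero_sub, Nat.add_sub_cancel, Nat.cast_zero, Nat.cast_add, Nat.cast_one,
      pow_zero, pow_succ] <;> ring

lemma dy_B (hf : Sm g) (hq : q ∈ U) (k l m i j : ℕ) :
    _root_.dy (B g k l m i j) q =
      (l : ℂ) * B g k (l-1) m i j q + B g k l m i (j+1) q := by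
  have hA1 : DifferentiableAt ℝ (fun r : ℝ × ℝ => ((r.1 : ℝ) : ℂ) ^ k) q := diffX.pow k
  have hA2 : DifferentiableAt ℝ (fun r : ℝ × ℝ => ((r.2 : ℝ) : ℂ) ^ l) q := diffY.pow l
  have hA3 : DifferentiableAt ℝ (fun r : ℝ × ℝ => (((r.1 : ℝ) : ℂ)⁻¹) ^ m) q := (diffIX hq).pow m
  have hA12 : DifferentiableAt ℝ
      (fun r : ℝ × ℝ => ((r.1 : ℝ) : ℂ) ^ k * ((r.2 : ℝ) : ℂ) ^ l) q := hA1.mul hA2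
  have hA123 : DifferentiableAt ℝ
      (fun r : ℝ × ℝ => ((r.1 : ℝ) : ℂ) ^ k * ((r.2 : ℝ) : ℂ) ^ l * (((r.1 : ℝ) : ℂ)⁻¹) ^ m) q :=
    hA12.mul hA3
  have hP : DifferentiableAt ℝ (P g i j) q := (hf.P i j).diffAt hq
  have e1 : _root_.dy (B g k l m i j) q =
      _root_.dy (fun r : ℝ × ℝ =>
        ((r.1 : ℝ) : ℂ) ^ k * ((r.2 : ℝ) : ℂ) ^ l * (((r.1 : ℝ) : ℂ)⁻¹) ^ m) q * P g i j q
      + (((q.1 : ℝ) : ℂ) ^ k * ((q.2 : ℝ) : ℂ) ^ l * (((q.1 : ℝ) : ℂ)⁻¹) ^ m)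
        * _root_.dy (P g i j) q := dy_mul hA123 hP
  have e2 : _root_.dy (fun r : ℝ × ℝ =>
        ((r.1 : ℝ) : ℂ) ^ k * ((r.2 : ℝ) : ℂ) ^ l * (((r.1 : ℝ) : ℂ)⁻¹) ^ m) q =
      _root_.dy (fun r : ℝ × ℝ => ((r.1 : ℝ) : ℂ) ^ k * ((r.2 : ℝ) : ℂ) ^ l) q
        * (((q.1 : ℝ) : ℂ)⁻¹) ^ m
      + (((q.1 : ℝ) : ℂ) ^ k * ((q.2 : ℝ) : ℂ) ^ l)
        * _root_.dy (fun r : ℝ × ℝ => (((r.1 : ℝ) : ℂ)⁻¹) ^ m) q := dy_mul hA12 hA3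
  have e3 : _root_.dy (fun r : ℝ × ℝ => ((r.1 : ℝ) : ℂ) ^ k * ((r.2 : ℝ) : ℂ) ^ l) q =
      _root_.dy (fun r : ℝ × ℝ => ((r.1 : ℝ) : ℂ) ^ k) q * ((q.2 : ℝ) : ℂ) ^ l
      + ((q.1 : ℝ) : ℂ) ^ k * _root_.dy (fun r : ℝ × ℝ => ((r.2 : ℝ) : ℂ) ^ l) q :=
    dy_mul hA1 hA2
  have p1 : _root_.dy (fun r : ℝ × ℝ => ((r.1 : ℝ) : ℂ) ^ k) q
      = (k : ℂ) * ((q.1 : ℝ) : ℂ) ^ (k - 1) * 0 := by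
    rw [dy_pow diffX k, dy_X]
  have p2 : _root_.dy (fun r : ℝ × ℝ => ((r.2 : ℝ) : ℂ) ^ l) q
      = (l : ℂ) * ((q.2 : ℝ) : ℂ) ^ (l - 1) * 1 := by
    rw [dy_pow diffY l, dy_Y]
  have p3 : _root_.dy (fun r : ℝ × ℝ => (((r.1 : ℝ) : ℂ)⁻¹) ^ m) q
      = (m : ℂ) * (((q.1 : ℝ) : ℂ)⁻¹) ^ (m - 1) * 0 := by
    rw [dy_pow (diffIX hq) m, dy_IX hq]
  rw [e1, e2, e3, p1, p2, p3, P_dy hf i j q hq]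
  show _ = (l : ℂ) * B g k (l-1) m i j q + B g k l m i (j+1) q
  simp only [S11.B]
  rcases l with _ | l <;>
    simp only [Nat.zero_sub, Nat.add_sub_cancel, Nat.cast_zero, Nat.cast_add, Nat.cast_one,
      pow_zero, pow_succ] <;> ring


/-! normal forms as lists -/

abbrev Ent : Type := ℂ × ℕ × ℕ × ℕ × ℕ × ℕ

def NFe (f : ℝ × ℝ → ℂ) : List Ent → ℝ × ℝ → ℂ
  | [] => fun _ => 0
  | (c, k, l, m, i, j) :: t => fun r => c * B f k l m i j r + NFe f t r

lemma diffNFe (hf : Sm g) (hq : q ∈ U) (L : List Ent) :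
    DifferentiableAt ℝ (NFe g L) q := by
  induction L with
  | nil => exact (differentiableAt_const 0)
  | cons e t ih =>
    obtain ⟨c, k, l, m, i, j⟩ := e
    exact ((diffB hf hq).const_mul c).add ih

def Dx : List Ent → List Ent
  | [] => []
  | (c, k, l, m, i, j) :: t =>
      ((k : ℂ) * c, k-1, l, m, i, j) :: (-((m : ℂ) * c), k, l, m+1, i, j)
        :: (c, k, l, m, i+1, j) :: Dx t

def Dy : List Ent → List Ent
  | [] => []
  | (c, k, l, m, i, j) :: t =>
      ((l : ℂ) * c, k, l-1, m, i, j) :: (c, k, l, m, i, j+1) :: Dy t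

lemma dx_NFe (hf : Sm g) (hq : q ∈ U) (L : List Ent) :
    _root_.dx (NFe g L) q = NFe g (Dx L) q := by
  induction L with
  | nil => simp [S11.NFe, S11.Dx, dx_const]
  | cons e t ih =>
    obtain ⟨c, k, l, m, i, j⟩ := e
    have h1 : DifferentiableAt ℝ (fun r => c * B g k l m i j r) q :=
      (diffB hf hq).const_mul c
    have h2 : DifferentiableAt ℝ (NFe g t) q := diffNFe hf hq t
    have e1 : _root_.dx (NFe g ((c, k, l, m, i, j) :: t)) q =
        _root_.dx (fun r => c * B g k l m i j r) q + _root_.dx (NFe g t) q := dx_add h1 h2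
    rw [e1, dx_const_mul (diffB hf hq) c, dx_B hf hq, ih]
    show _ = NFe g (((k : ℂ) * c, k-1, l, m, i, j) :: (-((m : ℂ) * c), k, l, m+1, i, j)
        :: (c, k, l, m, i+1, j) :: Dx t) q
    simp only [S11.NFe]
    ring

lemma dy_NFe (hf : Sm g) (hq : q ∈ U) (L : List Ent) :
    _root_.dy (NFe g L) q = NFe g (Dy L) q := by
  induction L with
  | nil => simp [S11.NFe, S11.Dy, dy_const]
  | cons e t ih =>
    obtain ⟨c, k, l, m, i, j⟩ := e
    have h1 : DifferentiableAt ℝ (fun r => c * B g k l m i j r) q :=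
      (diffB hf hq).const_mul c
    have h2 : DifferentiableAt ℝ (NFe g t) q := diffNFe hf hq t
    have e1 : _root_.dy (NFe g ((c, k, l, m, i, j) :: t)) q =
        _root_.dy (fun r => c * B g k l m i j r) q + _root_.dy (NFe g t) q := dy_add h1 h2
    rw [e1, dy_const_mul (diffB hf hq) c, dy_B hf hq, ih]
    show _ = NFe g (((l : ℂ) * c, k, l-1, m, i, j) :: (c, k, l, m, i, j+1) :: Dy t) q
    simp only [S11.NFe]
    ring

lemma smNFe (hf : Sm g) (L : List Ent) : Sm (NFe g L) := by
  induction L with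
  | nil => exact contDiffOn_const
  | cons e t ih =>
    obtain ⟨c, k, l, m, i, j⟩ := e
    have hB : Sm (B g k l m i j) := by
      have hX : Sm (fun r : ℝ × ℝ => ((r.1 : ℝ) : ℂ)) :=
        (Complex.ofRealCLM.contDiff.comp contDiff_fst).contDiffOn
      have hY : Sm (fun r : ℝ × ℝ => ((r.2 : ℝ) : ℂ)) :=
        (Complex.ofRealCLM.contDiff.comp contDiff_snd).contDiffOn
      have hIX : Sm (fun r : ℝ × ℝ => ((r.1 : ℝ) : ℂ)⁻¹) :=
        hX.inv (fun r hr => by exact_mod_cast hr)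
      exact (((hX.pow k).mul (hY.pow l)).mul (hIX.pow m)).mul (hf.P i j)
    exact (contDiffOn_const.mul hB).add ih

lemma sm_of_nf {L : List Ent} (hf : Sm g) (hnf : ∀ r ∈ U, h r = NFe g L r) : Sm h :=
  (smNFe hf L).congr hnf


/-! list algebra -/

def mulX : List Ent → List Ent
  | [] => []
  | (c, k, l, m, i, j) :: t => (c, k+1, l, m, i, j) :: mulX t

def mulY : List Ent → List Ent
  | [] => []
  | (c, k, l, m, i, j) :: t => (c, k, l+1, m, i, j) :: mulY t

def mulIX : List Ent → List Ent
  | [] => []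
  | (c, k, l, m, i, j) :: t => (c, k, l, m+1, i, j) :: mulIX t

def smulL (c' : ℂ) : List Ent → List Ent
  | [] => []
  | (c, k, l, m, i, j) :: t => (c' * c, k, l, m, i, j) :: smulL c' t

variable {r : ℝ × ℝ}

lemma NFe_append (La Lb : List Ent) : NFe g (La ++ Lb) r = NFe g La r + NFe g Lb r := by
  induction La with
  | nil => simp [S11.NFe]
  | cons e t ih =>
    obtain ⟨c, k, l, m, i, j⟩ := e
    simp only [List.cons_append, List.append_eq, S11.NFe, ih]; ring

lemma NFe_smulL (c' : ℂ) (L : List Ent) : NFe g (smulL c' L) r = c' * NFe g L r := by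
  induction L with
  | nil => simp [S11.NFe, S11.smulL]
  | cons e t ih =>
    obtain ⟨c, k, l, m, i, j⟩ := e
    simp only [S11.smulL, S11.NFe, ih]; ring

lemma NFe_mulX (L : List Ent) : NFe g (mulX L) r = ((r.1 : ℝ) : ℂ) * NFe g L r := by
  induction L with
  | nil => simp [S11.NFe, S11.mulX]
  | cons e t ih =>
    obtain ⟨c, k, l, m, i, j⟩ := e
    simp only [S11.mulX, S11.NFe, S11.B, ih, pow_succ]; ring

lemma NFe_mulY (L : List Ent) : NFe g (mulY L) r = ((r.2 : ℝ) : ℂ) * NFe g L r := by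
  induction L with
  | nil => simp [S11.NFe, S11.mulY]
  | cons e t ih =>
    obtain ⟨c, k, l, m, i, j⟩ := e
    simp only [S11.mulY, S11.NFe, S11.B, ih, pow_succ]; ring

lemma NFe_mulIX (L : List Ent) : NFe g (mulIX L) r = ((r.1 : ℝ) : ℂ)⁻¹ * NFe g L r := by
  induction L with
  | nil => simp [S11.NFe, S11.mulIX]
  | cons e t ih =>
    obtain ⟨c, k, l, m, i, j⟩ := e
    simp only [S11.mulIX, S11.NFe, S11.B, ih, pow_succ]; ring

/-! operator-level normal form lemmas -/

lemma nf_dx {L : List Ent} (hf : Sm g) (hnf : ∀ r ∈ U, h r = NFe g L r) :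
    ∀ r ∈ U, _root_.dx h r = NFe g (Dx L) r := fun r hr => by
  rw [dxU_congr hnf hr, dx_NFe hf hr]

lemma nf_dy {L : List Ent} (hf : Sm g) (hnf : ∀ r ∈ U, h r = NFe g L r) :
    ∀ r ∈ U, _root_.dy h r = NFe g (Dy L) r := fun r hr => by
  rw [dyU_congr hnf hr, dy_NFe hf hr]

def MopL (L : List Ent) : List Ent := mulX (Dy L) ++ smulL (-1) (mulY (Dx L))

lemma nf_Mop {L : List Ent} (hf : Sm g) (hnf : ∀ r ∈ U, h r = NFe g L r) :
    ∀ r ∈ U, Mop h r = NFe g (MopL L) r := fun r hr => by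
  show ((r.1 : ℝ) : ℂ) * _root_.dy h r - ((r.2 : ℝ) : ℂ) * _root_.dx h r = _
  rw [nf_dx hf hnf r hr, nf_dy hf hnf r hr, MopL, NFe_append, NFe_mulX, NFe_smulL, NFe_mulY]
  ring

def L1L (a : ℂ) (L : List Ent) : List Ent :=
  smulL (1/2) (MopL (Dx L) ++ Dx (MopL L)) ++ smulL (-a) (mulY (mulIX (mulIX L)))

lemma nf_L1 {a : ℂ} {L : List Ent} (hf : Sm g) (hnf : ∀ r ∈ U, h r = NFe g L r) :
    ∀ r ∈ U, L1 a h r = NFe g (L1L a L) r := fun r hr => by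
  show (1 / 2 : ℂ) * (Mop (_root_.dx h) r + _root_.dx (Mop h) r)
      - a * ((r.2 : ℝ) : ℂ) / ((r.1 : ℝ) : ℂ) ^ 2 * h r = _
  have hx : ((r.1 : ℝ) : ℂ) ≠ 0 := by exact_mod_cast hr
  rw [nf_Mop hf (nf_dx hf hnf) r hr, nf_dx hf (nf_Mop hf hnf) r hr, hnf r hr, L1L,
    NFe_append, NFe_smulL, NFe_smulL, NFe_mulY, NFe_mulIX, NFe_mulIX, NFe_append]
  ring

def L2L (a : ℂ) (L : List Ent) : List Ent :=
  MopL (MopL L) ++ smulL a (mulY (mulY (mulIX (mulIX L))))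

lemma nf_L2 {a : ℂ} {L : List Ent} (hf : Sm g) (hnf : ∀ r ∈ U, h r = NFe g L r) :
    ∀ r ∈ U, L2 a h r = NFe g (L2L a L) r := fun r hr => by
  show Mop (Mop h) r + a * ((r.2 : ℝ) : ℂ) ^ 2 / ((r.1 : ℝ) : ℂ) ^ 2 * h r = _
  rw [nf_Mop hf (nf_Mop hf hnf) r hr, hnf r hr, L2L,
    NFe_append, NFe_smulL, NFe_mulY, NFe_mulY, NFe_mulIX, NFe_mulIX]
  ring

def HL (a : ℂ) (L : List Ent) : List Ent :=
  Dx (Dx L) ++ Dy (Dy L) ++ smulL a (mulIX (mulIX L))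

lemma nf_Hop {a : ℂ} {L : List Ent} (hf : Sm g) (hnf : ∀ r ∈ U, h r = NFe g L r) :
    ∀ r ∈ U, Hop a h r = NFe g (HL a L) r := fun r hr => by
  show _root_.dx (_root_.dx h) r + _root_.dy (_root_.dy h) r
      + a / ((r.1 : ℝ) : ℂ) ^ 2 * h r = _
  rw [nf_dx hf (nf_dx hf hnf) r hr, nf_dy hf (nf_dy hf hnf) r hr, hnf r hr, HL,
    NFe_append, NFe_append, NFe_smulL, NFe_mulIX, NFe_mulIX]
  ring


end S11

/- STATEMENT 11 (E6 fourth-order identity, on the domain `x ≠ 0`):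
`L₁² + (1/4){L₂, X²} + (1/2) X L₂ X − L₂H + (a + 3/4)X² = 0`, with `X = ∂_y`. -/
set_option maxRecDepth 100000 in
set_option maxHeartbeats 4000000 in
open S11 in
/-- E6 fourth-order identity, on the domain `x ≠ 0`:
`L₁² + (1/4){L₂, X²} + (1/2) X L₂ X − L₂H + (a + 3/4)X² = 0`, with `X = ∂_y`. -/
theorem stmt11 (a : ℂ) (f : ℝ × ℝ → ℂ)
    (hf : ContDiffOn ℝ (⊤ : ℕ∞) f {p : ℝ × ℝ | p.1 ≠ 0}) :
    ∀ p : ℝ × ℝ, p.1 ≠ 0 →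
      L1 a (L1 a f) p
      + (1 / 4 : ℂ) * (L2 a (dy (dy f)) p + dy (dy (L2 a f)) p)
      + (1 / 2 : ℂ) * dy (L2 a (dy f)) p
      - L2 a (Hop a f) p + (a + 3 / 4) * dy (dy f) p = 0 := by
  intro p hp
  have hU : p ∈ S11.U := hp
  have hf' : S11.Sm f := hf.of_le (by simp)
  have hx : ((p.1 : ℝ) : ℂ) ≠ 0 := by exact_mod_cast hp
  have nf_f : ∀ r ∈ S11.U, f r = NFe f [((1:ℂ),0,0,0,0,0)] r := by
    intro r hr
    show f r = 1 * S11.B f 0 0 0 0 0 r + 0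
    simp [S11.B, show S11.P f 0 0 = f from rfl]
  have nf_dyf : ∀ r ∈ S11.U, dy f r = NFe f [((1:ℂ),0,0,0,0,1)] r := by
    intro r hr
    show dy f r = 1 * S11.B f 0 0 0 0 1 r + 0
    simp [S11.B, show S11.P f 0 1 = dy f from rfl]
  have nf_dydyf : ∀ r ∈ S11.U, dy (dy f) r = NFe f [((1:ℂ),0,0,0,0,2)] r := by
    intro r hr
    show dy (dy f) r = 1 * S11.B f 0 0 0 0 2 r + 0
    simp [S11.B, show S11.P f 0 2 = dy (dy f) from rfl]
  have h1 : L1 a (L1 a f) p = NFe f (L1L a (L1L a [((1:ℂ),0,0,0,0,0)])) p :=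
    nf_L1 hf' (nf_L1 hf' nf_f) p hU
  have h2a : L2 a (dy (dy f)) p = NFe f (L2L a [((1:ℂ),0,0,0,0,2)]) p :=
    nf_L2 hf' nf_dydyf p hU
  have h2b : dy (dy (L2 a f)) p = NFe f (Dy (Dy (L2L a [((1:ℂ),0,0,0,0,0)]))) p :=
    nf_dy hf' (nf_dy hf' (nf_L2 hf' nf_f)) p hU
  have h3 : dy (L2 a (dy f)) p = NFe f (Dy (L2L a [((1:ℂ),0,0,0,0,1)])) p :=
    nf_dy hf' (nf_L2 hf' nf_dyf) p hU
  have h4 : L2 a (Hop a f) p = NFe f (L2L a (HL a [((1:ℂ),0,0,0,0,0)])) p :=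
    nf_L2 hf' (nf_Hop hf' nf_f) p hU
  have h5 : dy (dy f) p = NFe f [((1:ℂ),0,0,0,0,2)] p := nf_dydyf p hU
  rw [h1, h2a, h2b, h3, h4, h5]
  simp only [S11.L1L, S11.L2L, S11.HL, S11.MopL, S11.Dx, S11.Dy, S11.mulX, S11.mulY,
    S11.mulIX, S11.smulL, List.append_eq, List.cons_append, List.nil_append,
    S11.NFe, S11.B]
  push_cast
  ring_nf
  field_simp
  ring
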